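/- Let G be a graph with m edges, no isolated vertices, and no subgraph isomorphic to C_6^△, maximizing the spectral radius among such graphs, and let x be the Perron eigenvector of G with extremal vertex u* (a vertex where x attains its maximum). Then no vertex of G other than u* is a cut vertex of G. -/

import Mathlib

open SimpleGraph

open scoped Classical in
/-- Real adjacency matrix of a simple graph. -/
noncomputable def adjMat {V : Type*} [Fintype V] (G : SimpleGraph V) : Matrix V V ℝ :=
  Matrix.of fun u v => if G.Adj u v then (1 : ℝ) else 0

/-- `G` contains a subgraph isomorphic to `F`. -/
def Copies {α β : Type*} (F : SimpleGraph α) (G : SimpleGraph β) : Prop :=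
  ∃ f : F →g G, Function.Injective f

/-- The join `K_k ∇ t·K_1`. -/
def cliqueJoinIndep (k t : ℕ) : SimpleGraph (Fin k ⊕ Fin t) where
  Adj u v := u ≠ v ∧ (u.isLeft = true ∨ v.isLeft = true)
  symm := ⟨fun u v ⟨h1, h2⟩ => ⟨h1.symm, h2.symm⟩⟩
  loopless := ⟨fun u ⟨h, _⟩ => h rfl⟩

instance (k t : ℕ) : DecidableRel (cliqueJoinIndep k t).Adj := fun u v =>
  inferInstanceAs (Decidable (u ≠ v ∧ (u.isLeft = true ∨ v.isLeft = true)))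

/-- `C_t^△`: the cycle `C_t` plus one extra vertex joined to the adjacent
vertices `0` and `1` of the cycle. -/
def cycTri (t : ℕ) : SimpleGraph (Fin t ⊕ Unit) :=
  SimpleGraph.fromRel (fun u v =>
    match u, v with
    | .inl i, .inl j => (cycleGraph t).Adj i j
    | .inl i, .inr _ => i.val = 0 ∨ i.val = 1
    | .inr _, _ => False)

noncomputable def specRad {V : Type*} [Fintype V] [DecidableEq V] (G : SimpleGraph V) : ℝ :=
  sSup (spectrum ℝ (adjMat G))

/-- A cut vertex: its deletion increases the number of connected components. -/
def IsCutVertex {V : Type*} (G : SimpleGraph V) (v : V) : Prop :=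
  Nat.card G.ConnectedComponent <
    Nat.card (G.induce ({v}ᶜ : Set V)).ConnectedComponent

/-!
Suppose `w ≠ u*` is a cut vertex. Then `G - w` has a component `C` that avoids `u*` and is joined
to `w`, while `w` keeps a neighbour outside `C`. Moving every edge between `w` and `C` over to `u*`
keeps the number of edges and creates no isolated vertex. It creates no copy of `C₆^△` either:
since `C₆^△` is 2-connected, a copy misses `C` (and then already lies in `G`) or lives in
`C ∪ {u*}` (and then swapping `u*` and `w` gives a copy in `G`). The Rayleigh quotient of the
Perron vector `x` changes by `2 (x_{u*} - x_w) ∑_{b} x_b ≥ 0`, so by maximality `x` is an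
eigenvector of the new graph for `λ(G)`; but its eigen-equation at `w` has lost the positive
term `∑_b x_b`.
-/

open Matrix

section Rayleigh

variable {n : Type*} [Fintype n] [DecidableEq n] {A : Matrix n n ℝ} {x : n → ℝ}

open scoped MatrixOrder in
lemma Matrix.IsHermitian.posSemidef_sSup_spectrum_smul_one_sub (hA : A.IsHermitian) :
    (sSup (spectrum ℝ A) • (1 : Matrix n n ℝ) - A).PosSemidef := by
  have h := le_algebraMap_of_spectrum_le (R := ℝ) (a := A) (r := sSup (spectrum ℝ A))
    (fun μ hμ => le_csSup finite_real_spectrum.bddAbove hμ) hA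
  rwa [le_iff, Algebra.algebraMap_eq_smul_one] at h

lemma Matrix.dotProduct_smul_one_sub_mulVec (r : ℝ) (hx : x ⬝ᵥ x = 1) :
    x ⬝ᵥ (r • (1 : Matrix n n ℝ) - A) *ᵥ x = r - x ⬝ᵥ A *ᵥ x := by
  simp [sub_mulVec, smul_mulVec, dotProduct_sub, hx]

lemma Matrix.IsHermitian.dotProduct_mulVec_le_sSup_spectrum (hA : A.IsHermitian)
    (hx : x ⬝ᵥ x = 1) : x ⬝ᵥ A *ᵥ x ≤ sSup (spectrum ℝ A) := by
  have h := hA.posSemidef_sSup_spectrum_smul_one_sub.dotProduct_mulVec_nonneg x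
  rw [star_trivial, dotProduct_smul_one_sub_mulVec _ hx] at h
  linarith

lemma Matrix.IsHermitian.mulVec_eq_of_dotProduct_mulVec_eq_sSup (hA : A.IsHermitian)
    (hx : x ⬝ᵥ x = 1) (h : x ⬝ᵥ A *ᵥ x = sSup (spectrum ℝ A)) :
    A *ᵥ x = sSup (spectrum ℝ A) • x := by
  have h0 := (hA.posSemidef_sSup_spectrum_smul_one_sub.dotProduct_mulVec_zero_iff x).mp
    (by rw [star_trivial, dotProduct_smul_one_sub_mulVec _ hx, h, sub_self])
  rw [sub_mulVec, smul_mulVec, one_mulVec, sub_eq_zero] at h0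
  exact h0.symm

lemma Matrix.IsHermitian.mulVec_eq_of_eq_add_vecMulVec {B : Matrix n n ℝ} (hB : B.IsHermitian)
    {d s : n → ℝ} (hBA : B = A + vecMulVec d s + vecMulVec s d) (hx : x ⬝ᵥ x = 1)
    (hAx : A *ᵥ x = sSup (spectrum ℝ A) • x) (hle : sSup (spectrum ℝ B) ≤ sSup (spectrum ℝ A))
    (hds : 0 ≤ (d ⬝ᵥ x) * (s ⬝ᵥ x)) : B *ᵥ x = sSup (spectrum ℝ A) • x := by
  have hquad : x ⬝ᵥ B *ᵥ x = sSup (spectrum ℝ A) + 2 * ((d ⬝ᵥ x) * (s ⬝ᵥ x)) := by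
    simp only [hBA, add_mulVec, dotProduct_add, hAx, vecMulVec_mulVec, op_smul_eq_smul,
      dotProduct_smul, hx, smul_eq_mul]
    rw [dotProduct_comm x d, dotProduct_comm x s]
    ring
  have hray := hB.dotProduct_mulVec_le_sSup_spectrum hx
  have heq : sSup (spectrum ℝ B) = sSup (spectrum ℝ A) := by linarith
  rw [← heq]
  exact hB.mulVec_eq_of_dotProduct_mulVec_eq_sSup hx (by linarith)

end Rayleigh

section AdjacencyMatrix

variable {V : Type*} [Fintype V]

lemma adjMat_isHermitian (G : SimpleGraph V) : (adjMat G).IsHermitian := by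
  classical
  ext a b
  simpa [adjMat] using if_congr (G.adj_comm b a) rfl rfl

lemma adjMat_eq_adjMatrix (G : SimpleGraph V) [DecidableRel G.Adj] : adjMat G = G.adjMatrix ℝ := by
  ext a b
  simp [adjMat]

lemma sum_sum_adjMat (G : SimpleGraph V) : ∑ a, ∑ b, adjMat G a b = 2 * G.edgeSet.ncard := by
  classical
  have hdeg (a : V) : ∑ b, adjMat G a b = G.degree a := by
    simpa [adjMat_eq_adjMatrix, mulVec, dotProduct] using
      adjMatrix_mulVec_const_apply (G := G) (α := ℝ) (a := 1) (v := a)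
  simp_rw [hdeg]
  rw [← coe_edgeFinset, Set.ncard_coe_finset]
  exact_mod_cast sum_degrees_eq_twice_card_edges G

lemma ncard_edgeSet_eq_of_adjMat_eq_add_vecMulVec {G H : SimpleGraph V} {d s : V → ℝ}
    (hHG : adjMat H = adjMat G + vecMulVec d s + vecMulVec s d) (hd : ∑ a, d a = 0) :
    H.edgeSet.ncard = G.edgeSet.ncard := by
  have h := sum_sum_adjMat H
  simp only [hHG, Matrix.add_apply, vecMulVec_apply, Finset.sum_add_distrib, ← Finset.mul_sum,
    ← Finset.sum_mul, hd, sum_sum_adjMat G, mul_zero, zero_mul, add_zero] at h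
  exact_mod_cast (mul_left_cancel₀ two_ne_zero h).symm

lemma specRad_congr [DecidableEq V] {W : Type*} [Fintype W] [DecidableEq W] {G : SimpleGraph V}
    {H : SimpleGraph W} (e : G ≃g H) : specRad G = specRad H := by
  have h : adjMat H = reindexAlgEquiv ℝ ℝ e.toEquiv (adjMat G) := by
    ext a b
    simp only [adjMat, coe_reindexAlgEquiv, reindex_apply, submatrix_apply, of_apply]
    congr 1
    exact propext e.symm.map_adj_iff.symm
  rw [specRad, specRad, h, AlgEquiv.spectrum_eq]

end AdjacencyMatrix

lemma copies_iff_isContained {α β : Type*} {F : SimpleGraph α} {G : SimpleGraph β} :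
    Copies F G ↔ F ⊑ G :=
  ⟨fun ⟨f, hf⟩ => ⟨f.toCopy hf⟩, fun ⟨f⟩ => ⟨f.toHom, f.injective⟩⟩

lemma specRad_le_of_forall_fin {α V : Type*} [Fintype V] [DecidableEq V] {F : SimpleGraph α}
    {m : ℕ} {r : ℝ}
    (hmax : ∀ (n : ℕ) (H : SimpleGraph (Fin n)), H.edgeSet.ncard = m →
      (∀ v, ∃ w, H.Adj v w) → ¬ Copies F H → specRad H ≤ r)
    {H : SimpleGraph V} (hm : H.edgeSet.ncard = m) (hH : ∀ v, ∃ w, H.Adj v w)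
    (hfree : ¬ Copies F H) : specRad H ≤ r := by
  let e : H ≃g H.map (Fintype.equivFin V).toEmbedding := Iso.map (Fintype.equivFin V) H
  rw [specRad_congr e]
  refine hmax _ _ ?_ (fun v => ?_) ?_
  · rw [← hm, ← Nat.card_coe_set_eq, ← Nat.card_coe_set_eq]
    exact (Nat.card_congr e.mapEdgeSet).symm
  · obtain ⟨b, hb⟩ := hH (e.symm v)
    exact ⟨e b, by simpa using e.map_adj_iff.mpr hb⟩
  · rwa [copies_iff_isContained, ← isContained_congr_right e, ← copies_iff_isContained]

section MoveEdges

variable {V : Type*} (G : SimpleGraph V) (w u : V) (S : Set V)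

/-- Replace each edge `w b` with `b ∈ S` by the edge `u b`. -/
def moveEdges : SimpleGraph V where
  Adj a b := (G.Adj a b ∧ ¬(a = w ∧ b ∈ S) ∧ ¬(b = w ∧ a ∈ S)) ∨
    (a ≠ b ∧ ((a = u ∧ b ∈ S) ∨ (b = u ∧ a ∈ S)))
  symm := ⟨fun a b h => by have := G.adj_comm a b; have := @ne_comm _ a b; tauto⟩
  loopless := ⟨fun a h => h.elim (fun h => G.loopless.irrefl a h.1) (fun h => h.1 rfl)⟩

variable {G w u S}

@[simp]
lemma moveEdges_adj {a b : V} : (moveEdges G w u S).Adj a b ↔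
    (G.Adj a b ∧ ¬(a = w ∧ b ∈ S) ∧ ¬(b = w ∧ a ∈ S)) ∨
      (a ≠ b ∧ ((a = u ∧ b ∈ S) ∨ (b = u ∧ a ∈ S))) :=
  Iff.rfl

lemma adjMat_moveEdges [Fintype V] [DecidableEq V] (huw : u ≠ w) (huS : u ∉ S)
    (hSw : ∀ b ∈ S, G.Adj w b) (hSu : ∀ b ∈ S, ¬ G.Adj u b) :
    adjMat (moveEdges G w u S) =
      adjMat G + vecMulVec (Pi.single u 1 - Pi.single w 1) (S.indicator 1) +
        vecMulVec (S.indicator 1) (Pi.single u 1 - Pi.single w 1) := by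
  have hwS : w ∉ S := fun h => G.loopless.irrefl w (hSw w h)
  classical
  ext a b
  simp only [adjMat, of_apply, Matrix.add_apply, vecMulVec_apply, Pi.sub_apply, Pi.single_apply,
    Set.indicator_apply, moveEdges_adj, Pi.one_apply]
  have hSw' (b : V) (hb : b ∈ S) : G.Adj b w := (hSw b hb).symm
  have hSu' (b : V) (hb : b ∈ S) : ¬ G.Adj b u := fun h => hSu b hb h.symm
  by_cases ha : a ∈ S <;> by_cases hb : b ∈ S <;> by_cases hau : a = u <;> by_cases hbu : b = u <;>
    by_cases haw : a = w <;> by_cases hbw : b = w <;> simp_all [eq_comm]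

lemma adj_of_moveEdges_adj {a b : V} (h : (moveEdges G w u S).Adj a b) (ha : a ∉ S) (hb : b ∉ S) :
    G.Adj a b := by
  rcases h with ⟨h, -, -⟩ | ⟨-, ⟨-, hb'⟩ | ⟨-, ha'⟩⟩
  exacts [h, absurd hb' hb, absurd ha' ha]

lemma moveEdges_exists_adj (huS : u ∉ S) (hG : ∀ a, ∃ b, G.Adj a b) (hw : ∃ b ∉ S, G.Adj w b)
    (a : V) : ∃ b, (moveEdges G w u S).Adj a b := by
  by_cases haw : a = w
  · obtain ⟨b, hbS, hb⟩ := hw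
    exact ⟨b, Or.inl ⟨haw ▸ hb, fun h => hbS h.2, fun h => hb.ne' (haw ▸ h.1)⟩⟩
  obtain ⟨b, hb⟩ := hG a
  by_cases hmoved : b = w ∧ a ∈ S
  · exact ⟨u, Or.inr ⟨fun h => huS (h ▸ hmoved.2), Or.inr ⟨rfl, hmoved.2⟩⟩⟩
  · exact ⟨b, Or.inl ⟨hb, fun h => haw h.1, hmoved⟩⟩

lemma ncard_edgeSet_moveEdges [Fintype V] (huw : u ≠ w) (huS : u ∉ S)
    (hSw : ∀ b ∈ S, G.Adj w b) (hSu : ∀ b ∈ S, ¬ G.Adj u b) :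
    (moveEdges G w u S).edgeSet.ncard = G.edgeSet.ncard := by
  classical
  exact ncard_edgeSet_eq_of_adjMat_eq_add_vecMulVec (adjMat_moveEdges huw huS hSw hSu)
    (by simp [Finset.sum_sub_distrib])

lemma specRad_lt_specRad_moveEdges [Fintype V] [DecidableEq V] (huw : u ≠ w) (huS : u ∉ S)
    (hSw : ∀ b ∈ S, G.Adj w b) (hSu : ∀ b ∈ S, ¬ G.Adj u b) (hS : S.Nonempty) {x : V → ℝ}
    (hpos : ∀ v, 0 < x v) (hx : x ⬝ᵥ x = 1) (heig : adjMat G *ᵥ x = specRad G • x)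
    (hxu : x w ≤ x u) : specRad G < specRad (moveEdges G w u S) := by
  by_contra! hle
  have hA := adjMat_moveEdges huw huS hSw hSu
  have hSx : 0 < S.indicator 1 ⬝ᵥ x := by
    obtain ⟨z, hz⟩ := hS
    refine Finset.sum_pos' (fun b _ => mul_nonneg ?_ (hpos b).le) ⟨z, Finset.mem_univ z, ?_⟩
    · exact Set.indicator_nonneg (fun _ _ => zero_le_one) b
    · simpa [Set.indicator_of_mem hz] using hpos z
  have hdx : 0 ≤ (Pi.single u 1 - Pi.single w 1) ⬝ᵥ x := by simpa [sub_dotProduct] using hxu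
  have hHx := (adjMat_isHermitian _).mulVec_eq_of_eq_add_vecMulVec hA hx heig hle
    (mul_nonneg hdx hSx.le)
  have hrow := congrFun hHx w
  rw [hA] at hrow
  refine hSx.ne' ?_
  simpa [add_mulVec, vecMulVec_mulVec, heig, huw.symm, specRad,
    Set.indicator_of_notMem (fun h => G.loopless.irrefl w (hSw w h))] using hrow

section Branch

variable {C : Set V} (hwC : w ∉ C) (huC : u ∉ C) (hC : ∀ a ∈ C, ∀ b, G.Adj a b → b ∈ C ∨ b = w)
  (hu : ∀ b ∈ C, ¬ G.Adj u b)

include huC hC in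
lemma mem_or_eq_of_moveEdges_adj {a b : V} (ha : a ∈ C)
    (h : (moveEdges G w u (C ∩ G.neighborSet w)).Adj a b) : b ∈ C ∨ b = u := by
  rcases h with ⟨hab, -, hmoved⟩ | ⟨-, ⟨rfl, -⟩ | ⟨rfl, -⟩⟩
  · refine (hC a ha b hab).imp_right fun hbw => ?_
    exact absurd ⟨hbw, ha, hbw ▸ hab.symm⟩ hmoved
  · exact absurd ha huC
  · exact Or.inr rfl

include hwC huC hu in
lemma adj_swap_of_moveEdges_adj [DecidableEq V] {a b : V} (ha : a ∈ C ∨ a = u) (hb : b ∈ C ∨ b = u)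
    (h : (moveEdges G w u (C ∩ G.neighborSet w)).Adj a b) :
    G.Adj (Equiv.swap u w a) (Equiv.swap u w b) := by
  have hfix {c : V} (hc : c ∈ C) : Equiv.swap u w c = c :=
    Equiv.swap_apply_of_ne_of_ne (fun h => huC (h ▸ hc)) (fun h => hwC (h ▸ hc))
  rcases ha with ha | rfl <;> rcases hb with hb | rfl
  · rcases h with ⟨hab, -, -⟩ | ⟨-, ⟨rfl, -⟩ | ⟨rfl, -⟩⟩
    · rwa [hfix ha, hfix hb]
    · exact absurd ha huC
    · exact absurd hb huC
  · rcases h with ⟨hab, -, -⟩ | ⟨-, ⟨rfl, -⟩ | ⟨-, -, hwa⟩⟩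
    · exact absurd hab.symm (hu a ha)
    · exact absurd ha huC
    · rw [hfix ha, Equiv.swap_apply_left]
      exact hwa.symm
  · rcases h with ⟨hab, -, -⟩ | ⟨-, ⟨-, -, hwb⟩ | ⟨rfl, -⟩⟩
    · exact absurd hab (hu b hb)
    · rw [hfix hb, Equiv.swap_apply_left]
      exact hwb
    · exact absurd hb huC
  · exact absurd rfl h.ne

end Branch

end MoveEdges

section CutVertex

variable {V : Type*} {G : SimpleGraph V} {w : V}

lemma reachable_induce_compl_singleton
    (h : ∀ y z (hy : G.Adj w y) (hz : G.Adj w z),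
      (G.induce {w}ᶜ).Reachable ⟨y, hy.ne'⟩ ⟨z, hz.ne'⟩)
    {a b : ({w}ᶜ : Set V)} (hab : G.Reachable a b) : (G.induce {w}ᶜ).Reachable a b := by
  obtain ⟨W⟩ := hab
  suffices key : ∀ {p q : V} (W : G.Walk p q) (hq : q ≠ w),
      (∀ hp : p ≠ w, (G.induce {w}ᶜ).Reachable ⟨p, hp⟩ ⟨q, hq⟩) ∧
      (p = w → ∀ n (hn : G.Adj w n), (G.induce {w}ᶜ).Reachable ⟨n, hn.ne'⟩ ⟨q, hq⟩) from
    (key W b.2).1 a.2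
  intro p q W hq
  induction W with
  | nil => exact ⟨fun _ => Reachable.refl _, fun hp => absurd hp hq⟩
  | @cons p r q hpr W ih =>
    obtain ⟨ih₁, ih₂⟩ := ih hq
    refine ⟨fun hp => ?_, ?_⟩
    · by_cases hr : r = w
      · exact ih₂ hr p (hr ▸ hpr.symm)
      · exact (show (G.induce {w}ᶜ).Adj ⟨p, hp⟩ ⟨r, hr⟩ from hpr).reachable.trans (ih₁ hr)
    · rintro rfl n hn
      exact (h n r hn hpr).trans (ih₁ hpr.ne')

lemma IsCutVertex.exists_adj_adj_not_reachable [Finite V] (hw : IsCutVertex G w) :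
    ∃ y z, ∃ (hy : G.Adj w y) (hz : G.Adj w z),
      ¬ (G.induce {w}ᶜ).Reachable ⟨y, hy.ne'⟩ ⟨z, hz.ne'⟩ := by
  by_contra! h
  have hinj :
      Function.Injective (ConnectedComponent.map (Embedding.induce (G := G) {w}ᶜ).toHom) := by
    refine fun c d => ConnectedComponent.ind₂ (fun a b hab => ?_) c d
    simp only [ConnectedComponent.map_mk, ConnectedComponent.eq] at hab ⊢
    exact reachable_induce_compl_singleton h hab
  exact (Nat.card_le_card_of_injective _ hinj).not_gt hw

lemma IsCutVertex.exists_branch [Finite V] (hw : IsCutVertex G w) {u : V} (huw : u ≠ w) :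
    ∃ C : Set V, w ∉ C ∧ u ∉ C ∧ (∀ a ∈ C, ∀ b, G.Adj a b → b ∈ C ∨ b = w) ∧
      (∃ z ∈ C, G.Adj w z) ∧ ∃ y ∉ C, G.Adj w y := by
  obtain ⟨y, z, hy, hz, hyz⟩ := hw.exists_adj_adj_not_reachable
  wlog hzu : ¬ (G.induce {w}ᶜ).Reachable ⟨z, hz.ne'⟩ ⟨u, huw⟩ generalizing y z
  · exact this z y hz hy (fun h => hyz h.symm) fun h => hyz (h.trans (not_not.mp hzu).symm)
  refine ⟨{a | ∃ ha : a ≠ w, (G.induce {w}ᶜ).Reachable ⟨z, hz.ne'⟩ ⟨a, ha⟩}, fun ⟨h, _⟩ => h rfl,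
    fun ⟨_, h⟩ => hzu h, fun a ⟨ha, hza⟩ b hab => ?_, ⟨z, ⟨hz.ne', Reachable.refl _⟩, hz⟩,
    ⟨y, fun ⟨_, h⟩ => hyz h.symm, hy⟩⟩
  by_cases hb : b = w
  · exact Or.inr hb
  · exact Or.inl ⟨hb, hza.trans (show (G.induce {w}ᶜ).Adj ⟨a, ha⟩ ⟨b, hb⟩ from hab).reachable⟩

end CutVertex

/-- `F` has no separating vertex: every nonempty `s` missing some vertex other than `p` has an
edge leaving it that avoids `p`. -/
def IsBiconnected {α : Type*} (F : SimpleGraph α) : Prop :=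
  ∀ (p : α) (s : Finset α), s.Nonempty → (∃ q ∉ s, q ≠ p) → ∃ a ∈ s, ∃ b ∉ s, b ≠ p ∧ F.Adj a b

instance (t : ℕ) : DecidableRel (cycTri t).Adj := fun a b => by
  unfold cycTri
  simp only [fromRel_adj]
  cases a <;> cases b <;> infer_instance

set_option maxRecDepth 2000 in
lemma isBiconnected_cycTri_six : IsBiconnected (cycTri 6) := by
  unfold IsBiconnected
  decide

lemma IsBiconnected.forall_notMem_or_forall_mem {α V : Type*} [Fintype α] {F : SimpleGraph α}
    (hF : IsBiconnected F) {H : SimpleGraph V} (f : F →g H) (hf : Function.Injective f)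
    {C : Set V} {u : V} (huC : u ∉ C) (hC : ∀ a ∈ C, ∀ b, H.Adj a b → b ∈ C ∨ b = u) :
    (∀ p, f p ∉ C) ∨ ∀ p, f p ∈ C ∨ f p = u := by
  classical
  by_contra! h
  obtain ⟨⟨a₀, ha₀⟩, q, hqC, hqu⟩ := h
  obtain ⟨p, hp, hqp⟩ : ∃ p, (∀ b, f b = u → b = p) ∧ q ≠ p := by
    by_cases hu : ∃ p, f p = u
    · obtain ⟨p, rfl⟩ := hu
      exact ⟨p, fun b hb => hf hb, fun h => hqu (h ▸ rfl)⟩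
    · push Not at hu
      exact ⟨a₀, fun b hb => absurd hb (hu b), by rintro rfl; exact hqC ha₀⟩
  obtain ⟨a, ha, b, hb, hbp, hab⟩ :=
    hF p (Finset.univ.filter (f · ∈ C)) ⟨a₀, by simpa⟩ ⟨q, by simpa, hqp⟩
  simp only [Finset.mem_filter, Finset.mem_univ, true_and] at ha hb
  exact (hC _ ha _ (f.map_adj hab)).elim hb fun h => hbp (hp b h)

lemma not_copies_moveEdges {α V : Type*} [Fintype α] [DecidableEq V] {F : SimpleGraph α}
    (hF : IsBiconnected F) {G : SimpleGraph V} (hG : ¬ Copies F G) {w u : V} {C : Set V}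
    (hwC : w ∉ C) (huC : u ∉ C) (hC : ∀ a ∈ C, ∀ b, G.Adj a b → b ∈ C ∨ b = w)
    (hu : ∀ b ∈ C, ¬ G.Adj u b) : ¬ Copies F (moveEdges G w u (C ∩ G.neighborSet w)) := by
  rintro ⟨f, hf⟩
  rcases hF.forall_notMem_or_forall_mem f hf huC
    (fun a ha b => mem_or_eq_of_moveEdges_adj huC hC ha) with hout | hin
  · refine hG ⟨⟨f, fun {p q} hpq => adj_of_moveEdges_adj (f.map_adj hpq) ?_ ?_⟩, hf⟩
    exacts [fun h => hout p h.1, fun h => hout q h.1]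
  · exact hG ⟨⟨Equiv.swap u w ∘ f, fun {p q} hpq =>
      adj_swap_of_moveEdges_adj hwC huC hu (hin p) (hin q) (f.map_adj hpq)⟩,
      (Equiv.swap u w).injective.comp hf⟩

theorem no_cut_vertex_besides_extremal {V : Type*} [Fintype V] [DecidableEq V] (G : SimpleGraph V)
    (m : ℕ) (hm : G.edgeSet.ncard = m)
    (hnoiso : ∀ v : V, ∃ w, G.Adj v w)
    (hfree : ¬ Copies (cycTri 6) G)
    (hmax : ∀ (n : ℕ) (H : SimpleGraph (Fin n)), H.edgeSet.ncard = m →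
      (∀ v, ∃ w, H.Adj v w) → ¬ Copies (cycTri 6) H → specRad H ≤ specRad G)
    (x : V → ℝ) (hpos : ∀ v, 0 < x v) (hunit : ∑ v, x v ^ 2 = 1)
    (heig : (adjMat G).mulVec x = specRad G • x)
    (u : V) (hu : ∀ v, x v ≤ x u) :
    ∀ w : V, w ≠ u → ¬ IsCutVertex G w := by
  intro w hwu hcut
  obtain ⟨C, hwC, huC, hC, ⟨z, hzC, hwz⟩, y, hyC, hwy⟩ := hcut.exists_branch hwu.symm
  have huC' : ∀ b ∈ C, ¬ G.Adj u b := fun b hb hub => (hC b hb u hub.symm).elim huC hwu.symm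
  have huS : u ∉ C ∩ G.neighborSet w := fun h => huC h.1
  have hSw : ∀ b ∈ C ∩ G.neighborSet w, G.Adj w b := fun b hb => hb.2
  have hSu : ∀ b ∈ C ∩ G.neighborSet w, ¬ G.Adj u b := fun b hb => huC' b hb.1
  have hx : x ⬝ᵥ x = 1 := by simpa [dotProduct, sq] using hunit
  refine (specRad_lt_specRad_moveEdges hwu.symm huS hSw hSu ⟨z, hzC, hwz⟩ hpos hx heig
    (hu w)).not_ge ?_
  exact specRad_le_of_forall_fin hmax (hm ▸ ncard_edgeSet_moveEdges hwu.symm huS hSw hSu)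
    (moveEdges_exists_adj huS hnoiso ⟨y, fun h => hyC h.1, hwy⟩)
    (not_copies_moveEdges isBiconnected_cycTri_six hfree hwC huC hC huC')
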